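/- arXiv:1812.08493 — 2 statements merged into one kernel-verified Lean document; each statement's English description precedes it below -/
import Mathlib

section
/- Suppose there exists a group homomorphism g_𝒰 : K₀^sp(𝒰)/im θ_𝒰 → K₀(𝒞) with g_𝒰 ∘ π_𝒰 = π_𝒞 ∘ j_𝒰. Then g_𝒰 and the homomorphism f_𝒰 : K₀(𝒞) → K₀^sp(𝒰)/im θ_𝒰 satisfying f_𝒰 ∘ π_𝒞 = π_𝒰 ∘ index_𝒰 are mutually inverse, so K₀^sp(𝒰)/im θ_𝒰 ≅ K₀(𝒞). (Proposition 3.4) -/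
/-!
The index of an object `U` of `𝒰` is `[U]` (take the tower of identity covers), so
`index_𝒰 ∘ j_𝒰 = id`, and chasing the defining squares of `f_𝒰` and `g_𝒰` gives
`f_𝒰 ∘ g_𝒰 = id`. It remains to see that `g_𝒰` is onto, i.e. that `K₀(𝒞)` is generated by
the classes of objects of `𝒰`. Resolve `X` by triangles `X' → U₀ → X → ΣX'` with `U₀ → X` a
`𝒰`-precover: if `Hom(𝒰, X⟦n⟧) = 0` for `1 ≤ n < s ≤ m - 1`, then `Hom(𝒰, X'⟦n⟧) = 0` for
`1 ≤ n ≤ s`, so after `m - 1` steps the cocone lies in `𝒰`, and `[X]` is an alternating sum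
of classes of objects of `𝒰`.
-/

open CategoryTheory CategoryTheory.Limits CategoryTheory.Pretriangulated ZeroObject

namespace ClusterK0

universe w v u

variable (k : Type w) [Field k]
variable (C : Type u) [Category.{v} C] [Preadditive C] [CategoryTheory.Linear k C]
  [HasZeroObject C] [HasShift C ℤ] [∀ n : ℤ, (shiftFunctor C n).Additive]
  [Pretriangulated C] [HasBinaryBiproducts C]

/-- The subgroup of relations defining the split Grothendieck group of the full
subcategory of `C` determined by the predicate `P`: isomorphism relations and
direct sum relations `[A ⊕ B] - [A] - [B]`. -/
def splitRel (P : C → Prop) : AddSubgroup (FreeAbelianGroup {X : C // P X}) :=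
  AddSubgroup.closure
    {x | (∃ A B : {X : C // P X}, Nonempty ((A : C) ≅ (B : C)) ∧
            x = FreeAbelianGroup.of A - FreeAbelianGroup.of B) ∨
         (∃ A B X : {X : C // P X}, Nonempty ((X : C) ≅ (A : C) ⊞ (B : C)) ∧
            x = FreeAbelianGroup.of X - FreeAbelianGroup.of A - FreeAbelianGroup.of B)}

/-- The split Grothendieck group `K₀^sp` of the full subcategory of `C` given by `P`. -/
abbrev K0sp (P : C → Prop) :=
  FreeAbelianGroup {X : C // P X} ⧸ splitRel C P

/-- The class `[X]` of an object `X` with `P X` in `K₀^sp`. -/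
def clsSp (P : C → Prop) (X : C) (hX : P X) : K0sp C P :=
  QuotientAddGroup.mk' (splitRel C P) (FreeAbelianGroup.of ⟨X, hX⟩)

/-- The subgroup of `K₀^sp(C)` generated by the elements `[A] - [B] + [C]` associated to
distinguished triangles `A ⟶ B ⟶ C ⟶ ΣA` of `C`. -/
def triRel : AddSubgroup (K0sp C (fun _ => True)) :=
  AddSubgroup.closure
    {x | ∃ T : Triangle C, (T ∈ distTriang C) ∧
      x = clsSp C (fun _ => True) T.obj₁ trivial - clsSp C (fun _ => True) T.obj₂ trivial
            + clsSp C (fun _ => True) T.obj₃ trivial}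

/-- The Grothendieck group of the triangulated category `C`. -/
abbrev K0 := K0sp C (fun _ => True) ⧸ triRel C

/-- The quotient homomorphism `π_C : K₀^sp(C) → K₀(C)`. -/
def piC : K0sp C (fun _ => True) →+ K0 C := QuotientAddGroup.mk' (triRel C)

/-- The class of an object of `C` in `K₀(C)`. -/
def cls (X : C) : K0 C := piC C (clsSp C (fun _ => True) X trivial)

section Part2

variable (k : Type w) [Field k]
variable (C : Type u) [Category.{v} C] [Preadditive C] [CategoryTheory.Linear k C]
  [HasZeroObject C] [HasShift C ℤ] [∀ n : ℤ, (shiftFunctor C n).Additive]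
  [Pretriangulated C] [HasBinaryBiproducts C]

/-- `P` defines a precovering subcategory of `C`. -/
def IsPrecovering (P : C → Prop) : Prop :=
  ∀ X : C, ∃ (U : C) (_ : P U) (μ : U ⟶ X),
    ∀ (U' : C), P U' → ∀ f : U' ⟶ X, ∃ g : U' ⟶ U, g ≫ μ = f

/-- `P` defines a preenveloping subcategory of `C`. -/
def IsPreenveloping (P : C → Prop) : Prop :=
  ∀ X : C, ∃ (U : C) (_ : P U) (ν : X ⟶ U),
    ∀ (U' : C), P U' → ∀ f : X ⟶ U', ∃ g : U ⟶ U', ν ≫ g = f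

/-- `P` defines an `m`-cluster tilting subcategory of the triangulated category `C`:
a functorially finite full subcategory `𝒰` with
`𝒰 = {C | Ext^{1..m-1}(𝒰,C)=0} = {C | Ext^{1..m-1}(C,𝒰)=0}`. -/
def IsClusterTilting (m : ℕ) (P : C → Prop) : Prop :=
  IsPrecovering C P ∧ IsPreenveloping C P ∧
  (∀ X : C, P X ↔ ∀ (U : C), P U → ∀ i : ℕ, 1 ≤ i → i ≤ m - 1 →
      ∀ f : U ⟶ X⟦(i : ℤ)⟧, f = 0) ∧
  (∀ X : C, P X ↔ ∀ (U : C), P U → ∀ i : ℕ, 1 ≤ i → i ≤ m - 1 →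
      ∀ f : X ⟶ U⟦(i : ℤ)⟧, f = 0)

/-- `μ : U ⟶ X` is a `𝒰`-cover of `X`: a right minimal `𝒰`-precover. -/
def IsCover (P : C → Prop) {U X : C} (μ : U ⟶ X) : Prop :=
  P U ∧ (∀ (U' : C), P U' → ∀ f : U' ⟶ X, ∃ g : U' ⟶ U, g ≫ μ = f) ∧
  (∀ φ : U ⟶ U, φ ≫ μ = μ → IsIso φ)

/-- `μ : U ⟶ X` is minimal right almost split in the subcategory given by `P`. -/
def IsMinRightAlmostSplit (P : C → Prop) {U X : C} (μ : U ⟶ X) : Prop :=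
  P U ∧ ¬ IsSplitEpi μ ∧
  (∀ (U' : C), P U' → ∀ f : U' ⟶ X, ¬ IsSplitEpi f → ∃ g : U' ⟶ U, g ≫ μ = f) ∧
  (∀ φ : U ⟶ U, φ ≫ μ = μ → IsIso φ)

/-- An object is indecomposable: nonzero, and any biproduct decomposition is trivial. -/
def Indecomp (X : C) : Prop :=
  ¬ IsZero X ∧ ∀ (A B : C), (X ≅ A ⊞ B) → IsZero A ∨ IsZero B

/-- `I` is a set of representatives of the isomorphism classes of indecomposable objects
of the subcategory given by `P` (denoted `Ind 𝒯` in the paper). -/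
structure IsInd (P : C → Prop) (I : Set C) : Prop where
  subset : ∀ M ∈ I, P M ∧ Indecomp C M
  complete : ∀ X : C, P X → Indecomp C X → ∃ M ∈ I, Nonempty (X ≅ M)
  unique : ∀ M ∈ I, ∀ M' ∈ I, Nonempty (M ≅ M') → M = M'

/-- The set `I = Ind 𝒯` is locally bounded. -/
def LocallyBounded (I : Set C) : Prop :=
  ∀ U ∈ I, {V | V ∈ I ∧ ∃ f : U ⟶ V, f ≠ 0}.Finite ∧
    {W | W ∈ I ∧ ∃ f : W ⟶ U, f ≠ 0}.Finite

/-- A Serre functor on the `k`-linear Hom-finite category `C`: a functor `S` with natural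
`k`-linear isomorphisms `Hom(X,Y) ≅ D Hom(Y, S X)`. -/
structure SerreFunctor where
  S : C ⥤ C
  equiv : ∀ X Y : C, (X ⟶ Y) ≃ₗ[k] Module.Dual k (Y ⟶ S.obj X)
  nat_left : ∀ {X X' Y : C} (f : X' ⟶ X) (g : X ⟶ Y) (h : Y ⟶ S.obj X'),
    equiv X' Y (f ≫ g) h = equiv X Y g (h ≫ S.map f)
  nat_right : ∀ {X Y Y' : C} (g : X ⟶ Y) (e : Y ⟶ Y') (h : Y' ⟶ S.obj X),
    equiv X Y' (g ≫ e) h = equiv X Y g (e ≫ h)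

/-- An Auslander--Reiten `(n+2)`-angle `SM → T_{n-1} → ⋯ → T_0 → M` in the subcategory
given by `P`, presented as a tower of triangles in `C` with intermediate objects
`X 1, …, X (n-1)` (where `X 0 = M` and `X n = SM`), in which the morphisms
`τ i : T i ⟶ X i` are `P`-covers for `1 ≤ i ≤ n-1` and `τ 0 : T 0 ⟶ M` is minimal
right almost split in the subcategory. -/
structure ARTower (n : ℕ) (P : C → Prop) (SM M : C) where
  T : ℕ → C
  X : ℕ → C
  a : ∀ i : ℕ, X (i + 1) ⟶ T i
  τ : ∀ i : ℕ, T i ⟶ X i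
  ξ : ∀ i : ℕ, X i ⟶ (X (i + 1))⟦(1 : ℤ)⟧
  hT : ∀ i, i < n → P (T i)
  hX0 : X 0 = M
  hXn : X n = SM
  hSM : P SM
  tri : ∀ i, i < n → (Triangle.mk (a i) (τ i) (ξ i) ∈ distTriang C)
  cover : ∀ i, 1 ≤ i → i < n → IsCover C P (τ i)
  mras : IsMinRightAlmostSplit C P (τ 0)

/-- The subgroup of `K₀^sp(𝒯)` generated by the elements
`-[M] + sign • [Sn M] + ∑ (-1)^i [T_i]` attached to the Auslander--Reiten
`(n+2)`-angles of the objects of `I = Ind 𝒯`. -/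
def arRel (n : ℕ) (P : C → Prop) (I : Set C) (Sn : C → C)
    (AR : ∀ M ∈ I, ARTower C n P (Sn M) M) (sign : ℤ) : AddSubgroup (K0sp C P) :=
  AddSubgroup.closure
    {x | ∃ (M : C) (hM : M ∈ I) (hPM : P M),
      x = -(clsSp C P M hPM) + sign • clsSp C P (Sn M) (AR M hM).hSM
          + ∑ i ∈ Finset.range n, ((-1 : ℤ)) ^ i •
              (if h : i < n then clsSp C P ((AR M hM).T i) ((AR M hM).hT i h) else 0)}

/-- For the Calabi--Yau case: the subgroup of `K₀^sp(𝒯)` generated by the elements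
`∑ (-1)^i [T_i]` attached to the Auslander--Reiten `(n+2)`-angles
`M → T_{n-1} → ⋯ → T_0 → M → Σⁿ M` of the objects of `I = Ind 𝒯`. -/
def arRelCY (n : ℕ) (P : C → Prop) (I : Set C)
    (AR : ∀ M ∈ I, ARTower C n P M M) : AddSubgroup (K0sp C P) :=
  AddSubgroup.closure
    {x | ∃ (M : C) (hM : M ∈ I),
      x = ∑ i ∈ Finset.range n, ((-1 : ℤ)) ^ i •
          (if h : i < n then clsSp C P ((AR M hM).T i) ((AR M hM).hT i h) else 0)}

/-- The subgroup of `K₀^sp(𝒮)` generated by the alternating sums `∑ (-1)^i [S_i]`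
over the `(d+2)`-angles of the `(d+2)`-angulated category `𝒮`, the latter being
presented as towers of triangles in `C`. -/
def angleRel (d : ℕ) (P : C → Prop) : AddSubgroup (K0sp C P) :=
  AddSubgroup.closure
    {x | ∃ (S : ℕ → C) (hS : ∀ i, i ≤ d + 1 → P (S i)) (Y : ℕ → C)
        (a : ∀ l : ℕ, Y (l + 1) ⟶ S (l + 1)) (b : ∀ l : ℕ, S (l + 1) ⟶ Y l)
        (η : ∀ l : ℕ, Y l ⟶ (Y (l + 1))⟦(1 : ℤ)⟧),
        Y 0 = S 0 ∧ Y d = S (d + 1) ∧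
        (∀ l, l < d → (Triangle.mk (a l) (b l) (η l) ∈ distTriang C)) ∧
        x = ∑ i ∈ Finset.range (d + 2), ((-1 : ℤ)) ^ i •
            (if h : i ≤ d + 1 then clsSp C P (S i) (hS i h) else 0)}

/-- The Grothendieck group of the `(d+2)`-angulated category `𝒮`. -/
abbrev K0ang (d : ℕ) (P : C → Prop) := K0sp C P ⧸ angleRel C d P

end Part2
section Part3

variable (k : Type w) [Field k]
variable (C : Type u) [Category.{v} C] [Preadditive C] [CategoryTheory.Linear k C]
  [HasZeroObject C] [HasShift C ℤ] [∀ n : ℤ, (shiftFunctor C n).Additive]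
  [Pretriangulated C] [HasBinaryBiproducts C]

/-- The homological functor `F_𝒰 : C ⥤ Mod 𝒰`, `X ↦ C(−, X)|_𝒰`, with values in
`k`-linear contravariant functors on the full subcategory given by `P`. -/
noncomputable def FF (P : C → Prop) :
    C ⥤ ((ObjectProperty.FullSubcategory P)ᵒᵖ ⥤ ModuleCat.{v} k) :=
  linearYoneda k C ⋙
    (Functor.whiskeringLeft (ObjectProperty.FullSubcategory P)ᵒᵖ Cᵒᵖ (ModuleCat.{v} k)).obj
      (ObjectProperty.ι P).op

/-- A `𝒰`-module `G` is coherent if it admits a projective presentation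
`𝒰(−,U₁) ⟶ 𝒰(−,U₀) ⟶ G ⟶ 0`. -/
def Coherent (P : C → Prop) (G : (ObjectProperty.FullSubcategory P)ᵒᵖ ⥤ ModuleCat.{v} k) : Prop :=
  ∃ (U₁ U₀ : C) (_ : P U₁) (_ : P U₀) (α : (FF k C P).obj U₁ ⟶ (FF k C P).obj U₀)
    (π : (FF k C P).obj U₀ ⟶ G) (w : α ≫ π = 0),
    Epi π ∧ (ShortComplex.mk α π w).Exact

/-- The subgroup of relations coming from short exact sequences of coherent `𝒰`-modules. -/
def sesRel (P : C → Prop) :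
    AddSubgroup (FreeAbelianGroup {G : (ObjectProperty.FullSubcategory P)ᵒᵖ ⥤ ModuleCat.{v} k // Coherent k C P G}) :=
  AddSubgroup.closure
    {x | ∃ (A B D : {G : (ObjectProperty.FullSubcategory P)ᵒᵖ ⥤ ModuleCat.{v} k // Coherent k C P G})
        (f : A.1 ⟶ B.1) (g : B.1 ⟶ D.1) (w : f ≫ g = 0),
        Mono f ∧ Epi g ∧ (ShortComplex.mk f g w).Exact ∧
        x = FreeAbelianGroup.of B - FreeAbelianGroup.of A - FreeAbelianGroup.of D}

/-- The Grothendieck group `K₀(mod 𝒰)` of the abelian category of coherent `𝒰`-modules. -/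
abbrev K0mod (P : C → Prop) :=
  FreeAbelianGroup {G : (ObjectProperty.FullSubcategory P)ᵒᵖ ⥤ ModuleCat.{v} k // Coherent k C P G} ⧸ sesRel k C P

/-- The class of a coherent `𝒰`-module in `K₀(mod 𝒰)`. -/
def clsMod (P : C → Prop) (G : (ObjectProperty.FullSubcategory P)ᵒᵖ ⥤ ModuleCat.{v} k)
    (hG : Coherent k C P G) : K0mod k C P :=
  QuotientAddGroup.mk' (sesRel k C P) (FreeAbelianGroup.of ⟨G, hG⟩)

/-- A tower of triangles in `C` computing the index of an object `X₀` with respect to the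
`m`-cluster tilting subcategory given by `P`: objects `U 0, …, U (m-1)` of `𝒰`,
intermediate objects `X i` with `X 0 = X₀` and `X (m-1) = U (m-1)`, triangles
`X (i+1) ⟶ U i ⟶ X i ⟶ Σ X (i+1)`, in which each `μ i : U i ⟶ X i` is a `𝒰`-cover. -/
structure CoverTower (m : ℕ) (P : C → Prop) (X₀ : C) where
  U : ℕ → C
  X : ℕ → C
  a : ∀ i : ℕ, X (i + 1) ⟶ U i
  μ : ∀ i : ℕ, U i ⟶ X i
  ξ : ∀ i : ℕ, X i ⟶ (X (i + 1))⟦(1 : ℤ)⟧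
  hU : ∀ i, i < m → P (U i)
  hX0 : X 0 = X₀
  hlast : X (m - 1) = U (m - 1)
  tri : ∀ i, i < m - 1 → (Triangle.mk (a i) (μ i) (ξ i) ∈ distTriang C)
  cover : ∀ i, i < m - 1 → IsCover C P (μ i)

/-- `ind` is the index homomorphism `index_𝒰 : K₀^sp(C) → K₀^sp(𝒰)`: for every object and
every tower of `𝒰`-covers as in the definition of the index, it takes the value
`∑ (-1)^i [U_i]`. -/
def IsIndexHom (m : ℕ) (P : C → Prop)
    (ind : K0sp C (fun _ => True) →+ K0sp C P) : Prop :=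
  ∀ (X₀ : C) (t : CoverTower C m P X₀),
    ind (clsSp C (fun _ => True) X₀ trivial) =
      ∑ i ∈ Finset.range m, ((-1 : ℤ)) ^ i •
        (if h : i < m then clsSp C P (t.U i) (t.hU i h) else 0)

/-- `N` belongs to `𝒰 ∗ Σ𝒰`: there is a triangle `U₁ ⟶ U₀ ⟶ N ⟶ ΣU₁` with `U₀, U₁ ∈ 𝒰`. -/
def InStarShift (P : C → Prop) (N : C) : Prop :=
  ∃ (U₁ U₀ : C) (_ : P U₁) (_ : P U₀) (f : U₁ ⟶ U₀) (g : U₀ ⟶ N)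
    (h : N ⟶ U₁⟦(1 : ℤ)⟧), Triangle.mk f g h ∈ distTriang C

/-- `θ` is the homomorphism `θ_𝒰 : K₀(mod 𝒰) → K₀^sp(𝒰)` determined by
`θ([F_𝒰 N]) = index_𝒰(Σ⁻¹N) + index_𝒰(N)` for `N ∈ 𝒰 ∗ Σ𝒰`. -/
def IsTheta (P : C → Prop) (ind : K0sp C (fun _ => True) →+ K0sp C P)
    (θ : K0mod k C P →+ K0sp C P) : Prop :=
  ∀ (N : C), InStarShift C P N → ∀ hN : Coherent k C P ((FF k C P).obj N),
    θ (clsMod k C P ((FF k C P).obj N) hN) =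
      ind (clsSp C (fun _ => True) (N⟦(-1 : ℤ)⟧) trivial) +
        ind (clsSp C (fun _ => True) N trivial)

/-- A coherent `𝒰`-module is simple (as an object of `mod 𝒰`). -/
def SimpleCoh (P : C → Prop) (G : (ObjectProperty.FullSubcategory P)ᵒᵖ ⥤ ModuleCat.{v} k) : Prop :=
  ¬ IsZero G ∧ ∀ (H : (ObjectProperty.FullSubcategory P)ᵒᵖ ⥤ ModuleCat.{v} k), Coherent k C P H →
    ∀ f : H ⟶ G, Mono f → (IsIso f ∨ f = 0)

/-- A coherent `𝒰`-module `G` has finite length in `mod 𝒰`: it has a finite filtration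
`0 = F 0 ⟶ F 1 ⟶ ⋯ ⟶ F r = G` by coherent submodules with simple coherent quotients. -/
noncomputable def FiniteLengthCoh (P : C → Prop)
    (G : (ObjectProperty.FullSubcategory P)ᵒᵖ ⥤ ModuleCat.{v} k) : Prop :=
  ∃ (r : ℕ) (F : ℕ → (ObjectProperty.FullSubcategory P)ᵒᵖ ⥤ ModuleCat.{v} k)
    (f : ∀ i : ℕ, F i ⟶ F (i + 1)),
    IsZero (F 0) ∧ F r = G ∧ (∀ i, i ≤ r → Coherent k C P (F i)) ∧
    ∀ i, i < r → Mono (f i) ∧ Coherent k C P (cokernel (f i)) ∧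
      SimpleCoh k C P (cokernel (f i))

end Part3
section Part4

/-- The vertex set of the regular `N`-gon `P`, `N = (p+1)q+2`, with its cyclic structure. -/
abbrev Vertex (q p : ℕ) := ZMod ((p + 1) * q + 2)

/-- `{u,v}` is a `q`-allowable diagonal of the `N`-gon: it spans `1 + kq` vertices for
some positive integer `k` (equivalently, `v = u + (1 + kq)` with `1 ≤ k ≤ p`). -/
def Allowable (q p : ℕ) (u v : Vertex q p) : Prop :=
  ∃ j : ℕ, 1 ≤ j ∧ j ≤ p ∧ v = u + ((1 + j * q : ℕ) : Vertex q p)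

/-- `{u,v}` is a `q`-allowable diagonal or an edge of the `N`-gon. -/
def AllowableOrEdge (q p : ℕ) (u v : Vertex q p) : Prop :=
  Allowable q p u v ∨ v = u + 1 ∨ u = v + 1

/-- The four vertices `b₀ < a₀ < b₁ < a₁` occur in this cyclic order (anticlockwise),
all four being distinct. -/
def CyclicConfig (q p : ℕ) (b₀ a₀ b₁ a₁ : Vertex q p) : Prop :=
  ∃ r s t w : ℕ, 0 < r ∧ 0 < s ∧ 0 < t ∧ 0 < w ∧
    r + s + t + w = (p + 1) * q + 2 ∧
    a₀ = b₀ + (r : Vertex q p) ∧ b₁ = a₀ + (s : Vertex q p) ∧ a₁ = b₁ + (t : Vertex q p)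

/-- The diagonals `{a₀,a₁}` and `{b₀,b₁}` cross. -/
def Crossing (q p : ℕ) (a₀ a₁ b₀ b₁ : Vertex q p) : Prop :=
  CyclicConfig q p b₀ a₀ b₁ a₁ ∨ CyclicConfig q p a₀ b₀ a₁ b₁

variable (k : Type w) [Field k]
variable (C : Type u) [Category.{v} C] [Preadditive C] [CategoryTheory.Linear k C]
  [HasZeroObject C] [HasShift C ℤ] [∀ n : ℤ, (shiftFunctor C n).Additive]
  [Pretriangulated C] [HasBinaryBiproducts C] [HasFiniteBiproducts C]

/-- The geometric model of the `q`-cluster category `C_q(A_p)` of Dynkin type `A_p`: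
the indecomposable objects of `C` are identified with the `q`-allowable diagonals of a
regular `((p+1)q+2)`-gon, Hom-spaces between indecomposables are at most one-dimensional,
`C` is `(q+1)`-Calabi--Yau, the suspension acts on diagonals by rotation, and
`Ext^{1..q}(a,b) ≠ 0` precisely when the corresponding diagonals cross. -/
structure ClusterModel (q p : ℕ) : Type (max u v (w + 1)) where
  diag : Vertex q p → Vertex q p → C
  symm : ∀ u v, diag u v = diag v u
  indec : ∀ u v, Allowable q p u v → Indecomp C (diag u v)
  surj : ∀ X : C, Indecomp C X → ∃ u v, Allowable q p u v ∧ Nonempty (X ≅ diag u v)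
  inj : ∀ u v u' v', Allowable q p u v → Allowable q p u' v' →
    Nonempty (diag u v ≅ diag u' v') → (u = u' ∧ v = v') ∨ (u = v' ∧ v = u')
  homDim : ∀ X Y : C, Indecomp C X → Indecomp C Y → Module.finrank k (X ⟶ Y) ≤ 1
  serre : SerreFunctor k C
  hserre : serre.S = shiftFunctor C ((q : ℤ) + 1)
  shift : ∀ u v, Allowable q p u v →
    Nonempty ((diag u v)⟦(1 : ℤ)⟧ ≅ diag (u - 1) (v - 1))
  ext_iff : ∀ u v u' v', Allowable q p u v → Allowable q p u' v' →
    ((∃ i : ℕ, 1 ≤ i ∧ i ≤ q ∧ ∃ f : diag u v ⟶ (diag u' v')⟦(i : ℤ)⟧, f ≠ 0) ↔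
      Crossing q p u v u' v')
  krullSchmidt : ∀ X : C, ∃ (n : ℕ) (Z : Fin n → C),
    (∀ i, Indecomp C (Z i)) ∧ Nonempty (X ≅ ⨁ Z)

end Part4

end ClusterK0

namespace CategoryTheory.Pretriangulated

variable {C : Type*} [Category C] [Preadditive C] [HasZeroObject C] [HasShift C ℤ]
  [∀ n : ℤ, (CategoryTheory.shiftFunctor C n).Additive] [Pretriangulated C]

lemma Triangle.hom_shift_one_obj₁_eq_zero (T : Triangle C) (hT : T ∈ distTriang C) {V : C}
    (hlift : ∀ g : V ⟶ T.obj₃, ∃ h, h ≫ T.mor₂ = g) (h₂ : ∀ g : V ⟶ T.obj₂⟦(1 : ℤ)⟧, g = 0)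
    (f : V ⟶ T.obj₁⟦(1 : ℤ)⟧) : f = 0 := by
  obtain ⟨x, rfl⟩ := T.coyoneda_exact₁ hT f (h₂ _)
  obtain ⟨y, rfl⟩ := hlift x
  rw [Category.assoc, comp_distTriang_mor_zero₂₃ T hT, comp_zero]

lemma Triangle.hom_shift_obj₁_eq_zero (T : Triangle C) (hT : T ∈ distTriang C)
    (n₀ n₁ : ℤ) (h : n₀ + 1 = n₁) {V : C}
    (h₃ : ∀ g : V ⟶ T.obj₃⟦n₀⟧, g = 0) (h₂ : ∀ g : V ⟶ T.obj₂⟦n₁⟧, g = 0)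
    (f : V ⟶ T.obj₁⟦n₁⟧) : f = 0 := by
  have hexact := (preadditiveCoyoneda.obj (Opposite.op V)).homologySequence_exact₁ T hT n₀ n₁ h
  obtain ⟨x, rfl⟩ := (ShortComplex.ab_exact_iff _).mp hexact f (h₂ _)
  exact (preadditiveCoyoneda_homologySequenceδ_apply T n₀ n₁ h x).trans (by
    rw [h₃ x, zero_comp])

end CategoryTheory.Pretriangulated

namespace ClusterK0

universe w v u

section SplitGrothendieckGroup

variable {C : Type*} [Category C] [Preadditive C] [HasBinaryBiproducts C]

lemma clsSp_zero [HasZeroObject C] (P : C → Prop) (h : P 0) : clsSp C P 0 h = 0 := by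
  have hrel : clsSp C P 0 h - clsSp C P 0 h - clsSp C P 0 h = 0 :=
    (QuotientAddGroup.eq_zero_iff _).mpr <| AddSubgroup.subset_closure <| Or.inr
      ⟨⟨0, h⟩, ⟨0, h⟩, ⟨0, h⟩,
        ⟨(isZero_zero C).iso ((biprod_isZero_iff _ _).mpr ⟨isZero_zero C, isZero_zero C⟩)⟩, rfl⟩
  simpa using hrel

lemma K0sp.hom_ext {P : C → Prop} {A : Type*} [AddCommGroup A] {φ ψ : K0sp C P →+ A}
    (h : ∀ X hX, φ (clsSp C P X hX) = ψ (clsSp C P X hX)) : φ = ψ :=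
  QuotientAddGroup.addMonoidHom_ext _ (FreeAbelianGroup.lift_ext _ _ fun X => h X.1 X.2)

end SplitGrothendieckGroup

section ExtVanishing

variable {C : Type*} [Category C] [Preadditive C] [HasShift C ℤ]

def ExtVanishingUpTo (P : C → Prop) (s : ℤ) (X : C) : Prop :=
  ∀ V, P V → ∀ n : ℤ, 1 ≤ n → n ≤ s → ∀ f : V ⟶ X⟦n⟧, f = 0

lemma ExtVanishingUpTo.mono {P : C → Prop} {s t : ℤ} {X : C} (h : ExtVanishingUpTo P t X)
    (hst : s ≤ t) : ExtVanishingUpTo P s X :=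
  fun V hV n h₁ h₂ => h V hV n h₁ (h₂.trans hst)

lemma IsClusterTilting.prop_iff {m : ℕ} {P : C → Prop} (hP : IsClusterTilting C m P) (X : C) :
    P X ↔ ExtVanishingUpTo P ((m : ℤ) - 1) X := by
  rw [hP.2.2.1 X]
  refine ⟨fun h V hV n h₁ h₂ f => ?_, fun h V hV i h₁ h₂ f => h V hV i (by omega) (by omega) f⟩
  lift n to ℕ using by omega
  exact h V hV n (by omega) (by omega) f

variable [HasZeroObject C] [∀ n : ℤ, (shiftFunctor C n).Additive]

lemma IsClusterTilting.prop_zero {m : ℕ} {P : C → Prop}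
    (hP : IsClusterTilting C m P) : P 0 :=
  (hP.prop_iff 0).mpr fun _ _ n _ _ f =>
    ((shiftFunctor C n).map_isZero (isZero_zero C)).eq_of_tgt f 0

variable [Pretriangulated C]

lemma extVanishingUpTo_of_precover {P : C → Prop} {s : ℤ} (T : Triangle C)
    (hT : T ∈ distTriang C) (hlift : ∀ V, P V → ∀ g : V ⟶ T.obj₃, ∃ h, h ≫ T.mor₂ = g)
    (h₂ : ExtVanishingUpTo P s T.obj₂) (h₃ : ExtVanishingUpTo P (s - 1) T.obj₃) :
    ExtVanishingUpTo P s T.obj₁ := by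
  intro V hV n hn hns f
  obtain rfl | hn := hn.eq_or_lt
  · exact T.hom_shift_one_obj₁_eq_zero hT (hlift V hV) (h₂ V hV 1 le_rfl hns) f
  · exact T.hom_shift_obj₁_eq_zero hT (n - 1) n (by omega)
      (h₃ V hV (n - 1) (by omega) (by omega)) (h₂ V hV n hn.le hns) f

end ExtVanishing

section GrothendieckGroup

variable {C : Type*} [Category C] [Preadditive C] [HasZeroObject C] [HasShift C ℤ]
  [∀ n : ℤ, (shiftFunctor C n).Additive] [Pretriangulated C] [HasBinaryBiproducts C]

lemma K0.closure_range_cls : AddSubgroup.closure (Set.range (cls C)) = ⊤ := by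
  rw [eq_top_iff]
  rintro y -
  obtain ⟨y, rfl⟩ := QuotientAddGroup.mk'_surjective (triRel C) y
  obtain ⟨y, rfl⟩ := QuotientAddGroup.mk'_surjective (splitRel C fun _ => True) y
  induction y using FreeAbelianGroup.induction_on with
  | zero => exact zero_mem _
  | of X => exact AddSubgroup.subset_closure ⟨X.1, rfl⟩
  | neg _ ih => simpa only [map_neg] using neg_mem ih
  | add _ _ ih₁ ih₂ => simpa only [map_add] using add_mem ih₁ ih₂

lemma cls_obj₃_of_distTriang (T : Triangle C) (hT : T ∈ distTriang C) :
    cls C T.obj₃ = cls C T.obj₂ - cls C T.obj₁ := by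
  have hrel : cls C T.obj₁ - cls C T.obj₂ + cls C T.obj₃ = 0 :=
    (QuotientAddGroup.eq_zero_iff _).mpr (AddSubgroup.subset_closure ⟨T, hT, rfl⟩)
  rw [← sub_eq_zero, ← hrel]
  abel

variable {m : ℕ} {P : C → Prop}

lemma IsClusterTilting.cls_mem_closure_of_extVanishingUpTo (hP : IsClusterTilting C m P)
    (r : ℕ) (X : C) (hX : ExtVanishingUpTo P ((m : ℤ) - 1 - r) X) :
    cls C X ∈ AddSubgroup.closure (cls C '' {U | P U}) := by
  induction r generalizing X with
  | zero =>
    exact AddSubgroup.subset_closure ⟨X, (hP.prop_iff X).mpr (by simpa using hX), rfl⟩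
  | succ r ih =>
    obtain ⟨U₀, hU₀, μ, hlift⟩ := hP.1 X
    obtain ⟨Z, g, h, hT⟩ := distinguished_cocone_triangle μ
    set T := (Triangle.mk μ g h).invRotate
    have hT' : T ∈ distTriang C := inv_rot_of_distTriang _ hT
    have hX' : ExtVanishingUpTo P ((m : ℤ) - 1 - r) T.obj₁ :=
      extVanishingUpTo_of_precover T hT' hlift
        (((hP.prop_iff U₀).mp hU₀).mono (by omega)) (hX.mono (by push_cast; omega))
    change cls C T.obj₃ ∈ _
    rw [cls_obj₃_of_distTriang T hT']
    exact sub_mem (AddSubgroup.subset_closure ⟨U₀, hU₀, rfl⟩) (ih _ hX')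

lemma IsClusterTilting.closure_cls_eq_top (hP : IsClusterTilting C m P) :
    AddSubgroup.closure (cls C '' {U | P U}) = ⊤ := by
  rw [eq_top_iff, ← K0.closure_range_cls, AddSubgroup.closure_le]
  rintro _ ⟨X, rfl⟩
  refine hP.cls_mem_closure_of_extVanishingUpTo m X fun _ _ n h₁ h₂ => ?_
  exact absurd h₂ (by omega)

end GrothendieckGroup

section Index

variable {C : Type*} [Category C] {m : ℕ} {P : C → Prop}

lemma isCover_id {X : C} (hX : P X) : IsCover C P (𝟙 X) :=
  ⟨hX, fun _ _ f => ⟨f, Category.comp_id f⟩, fun φ hφ => by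
    rw [Category.comp_id] at hφ
    rw [hφ]
    infer_instance⟩

variable [Preadditive C] [HasZeroObject C] [HasShift C ℤ]
  [∀ n : ℤ, (shiftFunctor C n).Additive] [Pretriangulated C]

noncomputable def CoverTower.ofProp (hP₀ : P 0) {V : C} (hV : P V) : CoverTower C m P V where
  U i := match i with | 0 => V | _ + 1 => 0
  X i := match i with | 0 => V | _ + 1 => 0
  a _ := 0
  μ _ := 𝟙 _
  ξ _ := 0
  hU i _ := match i with | 0 => hV | _ + 1 => hP₀
  hX0 := rfl
  hlast := by cases m - 1 <;> rfl
  tri _ _ := contractible_distinguished₁ _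
  cover i _ := match i with | 0 => isCover_id hV | _ + 1 => isCover_id hP₀

lemma IsIndexHom.apply_clsSp_of_prop [HasBinaryBiproducts C]
    {ind : K0sp C (fun _ => True) →+ K0sp C P}
    (hind : IsIndexHom C m P ind) (hm : 0 < m) (hP₀ : P 0) {V : C} (hV : P V) :
    ind (clsSp C (fun _ => True) V trivial) = clsSp C P V hV := by
  rw [hind V (CoverTower.ofProp hP₀ hV), Finset.sum_eq_single_of_mem 0 (Finset.mem_range.mpr hm)]
  · rw [dif_pos hm, pow_zero, one_smul]
    rfl
  · rintro (_ | i) - hi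
    · exact absurd rfl hi
    · split_ifs
      · exact smul_eq_zero_of_right _ (clsSp_zero P hP₀)
      · exact smul_zero _

end Index

/-- **Proposition 3.4.** Suppose there exists a group homomorphism
`g_𝒰 : K₀^sp(𝒰)/im θ_𝒰 → K₀(𝒞)` with `g_𝒰 ∘ π_𝒰 = π_𝒞 ∘ j_𝒰`. Then `g_𝒰` and the
homomorphism `f_𝒰 : K₀(𝒞) → K₀^sp(𝒰)/im θ_𝒰` satisfying `f_𝒰 ∘ π_𝒞 = π_𝒰 ∘ index_𝒰`
are mutually inverse, so `K₀^sp(𝒰)/im θ_𝒰 ≅ K₀(𝒞)`. -/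
theorem proposition34
    {k : Type w} [Field k]
    (C : Type u) [Category.{v} C] [Preadditive C] [CategoryTheory.Linear k C]
    [HasZeroObject C] [HasShift C ℤ] [∀ n : ℤ, (shiftFunctor C n).Additive]
    [Pretriangulated C] [HasBinaryBiproducts C] [IsIdempotentComplete C]
    [∀ X Y : C, Module.Finite k (X ⟶ Y)]
    (m : ℕ) (hm : 2 ≤ m)
    (P : C → Prop) (hP : IsClusterTilting C m P)
    (ind : K0sp C (fun _ => True) →+ K0sp C P) (hind : IsIndexHom C m P ind)
    (θ : K0mod k C P →+ K0sp C P) (hθ : IsTheta k C P ind θ)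
    (j : K0sp C P →+ K0sp C (fun _ => True))
    (hj : ∀ (X : C) (hX : P X), j (clsSp C P X hX) = clsSp C (fun _ => True) X trivial)
    (g : (K0sp C P ⧸ θ.range) →+ K0 C)
    (hg : g.comp (QuotientAddGroup.mk' θ.range) = (piC C).comp j)
    (f : K0 C →+ (K0sp C P ⧸ θ.range))
    (hf : f.comp (piC C) = (QuotientAddGroup.mk' θ.range).comp ind) :
    f.comp g = AddMonoidHom.id _ ∧ g.comp f = AddMonoidHom.id _ ∧
      Nonempty ((K0sp C P ⧸ θ.range) ≃+ K0 C) := by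
  have hind_j : ind.comp j = AddMonoidHom.id _ := K0sp.hom_ext fun X hX => by
    simpa [hj] using hind.apply_clsSp_of_prop (by omega) hP.prop_zero hX
  have hfg : f.comp g = AddMonoidHom.id _ := QuotientAddGroup.addMonoidHom_ext _ <| by
    rw [AddMonoidHom.comp_assoc, hg, ← AddMonoidHom.comp_assoc, hf, AddMonoidHom.comp_assoc,
      hind_j, AddMonoidHom.comp_id, AddMonoidHom.id_comp]
  have hg_surj : Function.Surjective g := by
    rw [← AddMonoidHom.range_eq_top, eq_top_iff, ← hP.closure_cls_eq_top, AddSubgroup.closure_le]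
    rintro _ ⟨U, hU, rfl⟩
    exact ⟨_, (DFunLike.congr_fun hg (clsSp C P U hU)).trans (congrArg (piC C) (hj U hU))⟩
  have hgf : g.comp f = AddMonoidHom.id _ := by
    have hleft : Function.LeftInverse f g := DFunLike.congr_fun hfg
    exact AddMonoidHom.ext (hleft.rightInverse_of_surjective hg_surj)
  exact ⟨hfg, hgf, ⟨AddMonoidHom.toAddEquiv g f hfg hgf⟩⟩

end ClusterK0
end

section
/- Let {a₀,a₁} and {b₀,b₁} be crossing q-allowable diagonals of P with b₀ < a₀ < b₁ < a₁ in the cyclic order on vertices. Then {a₀,b₀} is a q-allowable diagonal or an edge of P if and only if {a₁,b₁} is a q-allowable diagonal or an edge of P. (Lemma 7.11) -/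
open CategoryTheory CategoryTheory.Limits CategoryTheory.Pretriangulated ZeroObject

namespace ClusterK0

universe w v u

variable (k : Type w) [Field k]
variable (C : Type u) [Category.{v} C] [Preadditive C] [CategoryTheory.Linear k C]
  [HasZeroObject C] [HasShift C ℤ] [∀ n : ℤ, (shiftFunctor C n).Additive]
  [Pretriangulated C] [HasBinaryBiproducts C]

/-! Write `r, s, t, w` for the anticlockwise gaps `b₀ → a₀ → b₁ → a₁ → b₀`, which sum to
`(p + 1) * q + 2`. A vertex pair `{u, u + m}` with `0 < m < (p + 1) * q + 2` is an allowable
diagonal or an edge exactly when `m ≡ 1 (mod q)`. The two crossing diagonals give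
`s + t ≡ r + s ≡ 1`, so both `{a₀, b₀}` (gap `s + t + w`) and `{a₁, b₁}` (gap `w + r + s`)
are allowable or edges exactly when `w ≡ 0 (mod q)`. -/

theorem _root_.ZMod.natCast_inj_of_lt {n a b : ℕ} (ha : a < n) (hb : b < n) :
    (a : ZMod n) = b ↔ a = b := by
  refine ⟨fun h => ?_, congrArg _⟩
  rw [← ZMod.val_natCast_of_lt ha, ← ZMod.val_natCast_of_lt hb, h]

theorem _root_.ZMod.eq_add_natCast_add_one_iff {n m : ℕ} (hm : m < n) (u : ZMod n) :
    u = u + m + 1 ↔ m + 1 = n := by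
  rw [add_assoc, left_eq_add, ← Nat.cast_succ, ZMod.natCast_eq_zero_iff]
  exact ⟨fun h => le_antisymm hm (Nat.le_of_dvd m.succ_pos h), fun h => h ▸ dvd_rfl⟩

section Polygon

variable {q p : ℕ}

theorem allowable_add_iff {u : Vertex q p} {m : ℕ} (hm : m < (p + 1) * q + 2) :
    Allowable q p u (u + m) ↔ ∃ j, 1 ≤ j ∧ j ≤ p ∧ m = 1 + j * q := by
  refine exists_congr fun j => and_congr_right fun _ => and_congr_right fun hjp => ?_
  have hjq : 1 + j * q < (p + 1) * q + 2 := by nlinarith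
  rw [add_right_inj, ZMod.natCast_inj_of_lt hm hjq]

theorem allowableOrEdge_add_iff {u : Vertex q p} {m : ℕ} (hm : m < (p + 1) * q + 2) :
    AllowableOrEdge q p u (u + m) ↔
      (∃ j, 1 ≤ j ∧ j ≤ p ∧ m = 1 + j * q) ∨ m = 1 ∨ m + 1 = (p + 1) * q + 2 := by
  have hm1 : (m : Vertex q p) = 1 ↔ m = 1 := by
    simpa using ZMod.natCast_inj_of_lt (b := 1) hm (by omega)
  rw [AllowableOrEdge, allowable_add_iff hm, ZMod.eq_add_natCast_add_one_iff hm, add_right_inj, hm1]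

/-- The edge `u = (u + m) + 1` is the missing case `j = p + 1` of `m = 1 + j * q`. -/
theorem allowable_gap_iff_modEq {m : ℕ} (hm0 : 0 < m) (hm : m < (p + 1) * q + 2) :
    ((∃ j, 1 ≤ j ∧ j ≤ p ∧ m = 1 + j * q) ∨ m = 1 ∨ m + 1 = (p + 1) * q + 2) ↔
      m ≡ 1 [MOD q] := by
  constructor
  · rintro (⟨j, -, -, rfl⟩ | rfl | hN)
    · simp [Nat.ModEq]
    · rfl
    · rw [show m = 1 + (p + 1) * q by omega]
      simp [Nat.ModEq]
  · intro hmod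
    obtain ⟨j, hj⟩ := (Nat.modEq_iff_dvd' hm0).mp hmod.symm
    rcases Nat.lt_or_ge p j with hpj | hjp
    · refine .inr (.inr ?_)
      have : (p + 1) * q ≤ j * q := Nat.mul_le_mul_right q hpj
      rw [mul_comm] at hj
      omega
    · rcases Nat.eq_zero_or_pos j with rfl | hj0
      · exact .inr (.inl (by omega))
      · exact .inl ⟨j, hj0, hjp, by rw [mul_comm] at hj; omega⟩

theorem allowableOrEdge_add_iff_modEq {u : Vertex q p} {m : ℕ} (hm0 : 0 < m)
    (hm : m < (p + 1) * q + 2) :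
    AllowableOrEdge q p u (u + m) ↔ m ≡ 1 [MOD q] :=
  (allowableOrEdge_add_iff hm).trans (allowable_gap_iff_modEq hm0 hm)

end Polygon

theorem lemma711_general
    (q p : ℕ)
    (a₀ a₁ b₀ b₁ : Vertex q p)
    (ha : Allowable q p a₀ a₁) (hb : Allowable q p b₀ b₁)
    (hconf : CyclicConfig q p b₀ a₀ b₁ a₁) :
    AllowableOrEdge q p a₀ b₀ ↔ AllowableOrEdge q p a₁ b₁ := by
  obtain ⟨r, s, t, w, hr, hs, ht, hw, hN, rfl, rfl, rfl⟩ := hconf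
  have hwrap : ∀ (x : Vertex q p) (m m' : ℕ), m + m' = (p + 1) * q + 2 → x + m + m' = x := by
    intro x m m' h
    rw [add_assoc, ← Nat.cast_add, h, ZMod.natCast_self, add_zero]
  have hst : s + t ≡ 1 [MOD q] :=
    (allowableOrEdge_add_iff_modEq (u := b₀ + (r : Vertex q p)) (m := s + t) (by omega)
      (by omega)).mp (.inl (by simpa only [add_assoc, Nat.cast_add] using ha))
  have hrs : r + s ≡ 1 [MOD q] :=
    (allowableOrEdge_add_iff_modEq (u := b₀) (m := r + s) (by omega) (by omega)).mp
      (.inl (by simpa only [add_assoc, Nat.cast_add] using hb))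
  have hgap : s + t + w ≡ 1 [MOD q] ↔ w + r + s ≡ 1 [MOD q] := by
    simp only [← ZMod.natCast_eq_natCast_iff, Nat.cast_add, Nat.cast_one] at hst hrs ⊢
    constructor <;> intro h
    · linear_combination h - hst + hrs
    · linear_combination h + hst - hrs
  calc AllowableOrEdge q p (b₀ + r) b₀
      ↔ AllowableOrEdge q p (b₀ + r) (b₀ + r + ((s + t + w : ℕ) : Vertex q p)) := by
        rw [hwrap b₀ r (s + t + w) (by omega)]
    _ ↔ s + t + w ≡ 1 [MOD q] := allowableOrEdge_add_iff_modEq (by omega) (by omega)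
    _ ↔ w + r + s ≡ 1 [MOD q] := hgap
    _ ↔ AllowableOrEdge q p (b₀ + r + s + t)
          (b₀ + r + s + t + ((w + r + s : ℕ) : Vertex q p)) :=
        (allowableOrEdge_add_iff_modEq (by omega) (by omega)).symm
    _ ↔ AllowableOrEdge q p (b₀ + r + s + t) (b₀ + r + s) := by
        rw [hwrap (b₀ + r + s) t (w + r + s) (by omega)]

/-- **Lemma 7.11.** Let `{a₀,a₁}` and `{b₀,b₁}` be crossing `q`-allowable diagonals of the
regular `((p+1)q+2)`-gon with `b₀ < a₀ < b₁ < a₁` in the cyclic order on vertices. Then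
`{a₀,b₀}` is a `q`-allowable diagonal or an edge if and only if `{a₁,b₁}` is a
`q`-allowable diagonal or an edge. -/
theorem lemma711
    (q p : ℕ) (hq : 0 < q) (hp : 0 < p)
    (a₀ a₁ b₀ b₁ : Vertex q p)
    (ha : Allowable q p a₀ a₁) (hb : Allowable q p b₀ b₁)
    (hconf : CyclicConfig q p b₀ a₀ b₁ a₁) :
    AllowableOrEdge q p a₀ b₀ ↔ AllowableOrEdge q p a₁ b₁ :=
  lemma711_general q p a₀ a₁ b₀ b₁ ha hb hconf

end ClusterK0
end
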